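/- Consider the list schedule of a finite list of jobs with nonnegative sizes on m ≥ 1 machines with zero initial loads, and let F be its free time. Then for every τ ≥ F, the total size of the jobs in the list whose size is at most τ is at most m·(F + τ). -/

import Mathlib

/-- The machine of minimum load, ties broken by lowest machine index. -/
noncomputable def bestMachine {m : ℕ} (hm : 0 < m) (ℓ : Fin m → ℝ) : Fin m :=
  (Finset.univ.filter fun i => ∀ j, ℓ i ≤ ℓ j).min' (by
    obtain ⟨i, -, hi⟩ := Finset.exists_min_image Finset.univ ℓ ⟨⟨0, hm⟩, Finset.mem_univ _⟩
    exact ⟨i, Finset.mem_filter.mpr ⟨Finset.mem_univ _, fun j => hi j (Finset.mem_univ _)⟩⟩)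

/-- One step of list scheduling: assign a job of size `s` to the best machine. -/
noncomputable def schedStep {m : ℕ} (hm : 0 < m) (ℓ : Fin m → ℝ) (s : ℝ) : Fin m → ℝ :=
  Function.update ℓ (bestMachine hm ℓ) (ℓ (bestMachine hm ℓ) + s)

/-- Machine loads after list-scheduling `jobs` starting from initial loads `ℓ`. -/
noncomputable def loadsAfter {m : ℕ} (hm : 0 < m) (ℓ : Fin m → ℝ) : List ℝ → (Fin m → ℝ)
  | [] => ℓ
  | s :: rest => loadsAfter hm (schedStep hm ℓ s) rest

/-- The free time: minimum machine load after all jobs are assigned. -/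
noncomputable def freeTime {m : ℕ} (hm : 0 < m) (ℓ : Fin m → ℝ) (jobs : List ℝ) : ℝ :=
  Finset.univ.inf' ⟨⟨0, hm⟩, Finset.mem_univ _⟩ (loadsAfter hm ℓ jobs)

/-- Total completion time of the list schedule. -/
noncomputable def totalCompletion {m : ℕ} (hm : 0 < m) (ℓ : Fin m → ℝ) : List ℝ → ℝ
  | [] => 0
  | s :: rest => (ℓ (bestMachine hm ℓ) + s) + totalCompletion hm (schedStep hm ℓ s) rest

/-- The sequence of machines to which successive jobs are assigned. -/
noncomputable def assignSeq {m : ℕ} (hm : 0 < m) (ℓ : Fin m → ℝ) : List ℝ → List (Fin m)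
  | [] => []
  | s :: rest => bestMachine hm ℓ :: assignSeq hm (schedStep hm ℓ s) rest

/-- The optimal free time of a multiset of jobs: min over orderings, zero initial loads. -/
noncomputable def optFreeTime {m : ℕ} (hm : 0 < m) (J : Multiset ℝ) : ℝ :=
  sInf {F | ∃ l : List ℝ, (l : Multiset ℝ) = J ∧ F = freeTime hm (fun _ => 0) l}

/-- The optimal total completion time of a multiset of jobs: min over orderings. -/
noncomputable def optTotalCompletion {m : ℕ} (hm : 0 < m) (J : Multiset ℝ) : ℝ :=
  sInf {C | ∃ l : List ℝ, (l : Multiset ℝ) = J ∧ C = totalCompletion hm (fun _ => 0) l}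

/-! With `T = F + τ`, the headroom `∑ i, max 0 (T - ℓ i)` of the current loads `ℓ` pays for every
job of size at most `τ`: such a job goes to a machine of load at most `F` (loads only grow, and `F`
is the final minimum), so it fits below `T` and uses up exactly its size of headroom, while larger
jobs never increase the headroom. Initially the headroom is `m * T`. -/

theorem Fintype.sum_update_add_self {ι M : Type*} [Fintype ι] [DecidableEq ι] [AddCommMonoid M]
    (f : ι → M) (i : ι) (x : M) :
    ∑ j, Function.update f i x j + f i = ∑ j, f j + x := by
  rw [Finset.sum_update_of_mem (Finset.mem_univ i),
    Finset.sum_eq_add_sum_sdiff_singleton_of_mem (Finset.mem_univ i) f]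
  abel

section ListScheduling

variable {m : ℕ} (hm : 0 < m)

theorem bestMachine_le (ℓ : Fin m → ℝ) (j : Fin m) : ℓ (bestMachine hm ℓ) ≤ ℓ j :=
  (Finset.mem_filter.mp (Finset.min'_mem (Finset.univ.filter fun i => ∀ j, ℓ i ≤ ℓ j) _)).2 j

theorem le_schedStep (ℓ : Fin m → ℝ) {s : ℝ} (hs : 0 ≤ s) (i : Fin m) :
    ℓ i ≤ schedStep hm ℓ s i := by
  unfold schedStep
  rcases eq_or_ne i (bestMachine hm ℓ) with rfl | h
  · simpa using hs
  · rw [Function.update_of_ne h]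

theorem sum_comp_schedStep_add (φ : ℝ → ℝ) (ℓ : Fin m → ℝ) (s : ℝ) :
    ∑ i, φ (schedStep hm ℓ s i) + φ (ℓ (bestMachine hm ℓ)) =
      ∑ i, φ (ℓ i) + φ (ℓ (bestMachine hm ℓ) + s) := by
  have h := Fintype.sum_update_add_self (φ ∘ ℓ) (bestMachine hm ℓ) (φ (ℓ (bestMachine hm ℓ) + s))
  rwa [← Function.comp_update] at h

theorem le_loadsAfter {jobs : List ℝ} (hjobs : ∀ s ∈ jobs, 0 ≤ s) (ℓ : Fin m → ℝ) (i : Fin m) :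
    ℓ i ≤ loadsAfter hm ℓ jobs i := by
  induction jobs generalizing ℓ with
  | nil => rfl
  | cons s rest ih =>
    rw [List.forall_mem_cons] at hjobs
    exact (le_schedStep hm ℓ hjobs.1 i).trans (ih hjobs.2 _)

theorem le_freeTime {jobs : List ℝ} (hjobs : ∀ s ∈ jobs, 0 ≤ s) {ℓ : Fin m → ℝ} {c : ℝ}
    (hc : ∀ i, c ≤ ℓ i) : c ≤ freeTime hm ℓ jobs :=
  Finset.le_inf' _ _ fun i _ => (hc i).trans (le_loadsAfter hm hjobs ℓ i)

theorem freeTime_cons (ℓ : Fin m → ℝ) (s : ℝ) (rest : List ℝ) :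
    freeTime hm ℓ (s :: rest) = freeTime hm (schedStep hm ℓ s) rest := rfl

theorem sum_filter_le_sum_max_zero_sub (τ : ℝ) {jobs : List ℝ} (hjobs : ∀ s ∈ jobs, 0 ≤ s)
    (ℓ : Fin m → ℝ) :
    (jobs.filter (fun s => s ≤ τ)).sum ≤
      ∑ i, max 0 (freeTime hm ℓ jobs + τ - ℓ i) := by
  induction jobs generalizing ℓ with
  | nil => exact Finset.sum_nonneg fun i _ => le_max_left _ _
  | cons s rest ih =>
    rw [List.forall_mem_cons] at hjobs
    obtain ⟨hs, hrest⟩ := hjobs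
    set ℓ' := schedStep hm ℓ s
    set b := bestMachine hm ℓ
    set T := freeTime hm ℓ' rest + τ
    rw [freeTime_cons]
    have hIH := ih hrest ℓ'
    by_cases hsτ : s ≤ τ
    · rw [List.filter_cons_of_pos (by simpa using hsτ), List.sum_cons]
      have hbT : ℓ b ≤ freeTime hm ℓ' rest :=
        le_freeTime hm hrest fun i => (bestMachine_le hm ℓ i).trans (le_schedStep hm ℓ hs i)
      have hroom : s + max 0 (T - (ℓ b + s)) ≤ max 0 (T - ℓ b) :=
        calc s + max 0 (T - (ℓ b + s)) = T - ℓ b := by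
              rw [max_eq_right (by linarith)]; ring
          _ ≤ max 0 (T - ℓ b) := le_max_right _ _
      have hsum := sum_comp_schedStep_add hm (fun x => max 0 (T - x)) ℓ s
      linarith
    · rw [List.filter_cons_of_neg (by simpa using hsτ)]
      refine hIH.trans (Finset.sum_le_sum fun i _ => ?_)
      exact max_le_max le_rfl (by linarith [le_schedStep hm ℓ hs i])

end ListScheduling

/-- for any τ ≥ F (the free time), the total size of jobs of
size at most τ is at most m·(F + τ). -/
theorem stmt10 (m : ℕ) (hm : 0 < m) (jobs : List ℝ) (hjobs : ∀ s ∈ jobs, 0 ≤ s)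
    (τ : ℝ) (hτ : freeTime hm (fun _ => 0) jobs ≤ τ) :
    (jobs.filter (fun s => s ≤ τ)).sum ≤
      (m : ℝ) * (freeTime hm (fun _ => 0) jobs + τ) := by
  have hF : 0 ≤ freeTime hm (fun _ => 0) jobs := le_freeTime hm hjobs fun _ => le_rfl
  calc (jobs.filter (fun s => s ≤ τ)).sum
      ≤ ∑ _i : Fin m, max 0 (freeTime hm (fun _ => 0) jobs + τ - 0) :=
        sum_filter_le_sum_max_zero_sub hm τ hjobs _
    _ = (m : ℝ) * (freeTime hm (fun _ => 0) jobs + τ) := by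
        rw [sub_zero, max_eq_right (by linarith), Finset.sum_const, Finset.card_univ,
          Fintype.card_fin, nsmul_eq_mul]
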